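/- arXiv:1311.0490 — 2 statements merged into one kernel-verified Lean document; each statement's English description precedes it below -/
import Mathlib

section
/- For the almost Mathieu operator H_{λ,α,θ} with irrational α, the spectrum of H_{λ,α,θ} as a subset of ℝ is independent of θ. -/
/-!
Conjugating `H_θ` by the shift `u ↦ u(· + k)` gives `H_{θ + kα}`, and the phase only matters
modulo `1`, so `spectrum H_θ` is constant on the orbit `θ + ℤα + ℤ`, which is dense when `α` is
irrational. Since `θ ↦ H_θ` is Lipschitz in operator norm and resolvent sets are open, the spectrum
can only grow when passing to a limit of conjugates; applying this in both directions gives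
equality.
-/

open Real
open scoped ENNReal

namespace lp

variable {α β 𝕜 E : Type*} [NormedAddCommGroup E] {p : ℝ≥0∞}

theorem _root_.Memℓp.comp_equiv {f : β → E} (hf : Memℓp f p) (e : α ≃ β) :
    Memℓp (f ∘ e) p := by
  rcases p.trichotomy with rfl | rfl | hp
  · exact memℓp_zero (hf.finite_dsupport.preimage e.injective.injOn)
  · exact memℓp_infty (e.surjective.range_comp (fun i => ‖f i‖) ▸ hf.bddAbove)
  · exact memℓp_gen ((e.summable_iff (f := fun i => ‖f i‖ ^ p.toReal)).2 (hf.summable hp))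

theorem norm_comp_equiv [Fact (1 ≤ p)] (f : lp (fun _ : β => E) p) (e : α ≃ β) :
    ‖(⟨f ∘ e, (lp.memℓp f).comp_equiv e⟩ : lp (fun _ : α => E) p)‖ = ‖f‖ := by
  rcases p.trichotomy with rfl | rfl | hp
  · exact absurd (Fact.out : (1 : ℝ≥0∞) ≤ 0) (by norm_num)
  · simp only [norm_eq_ciSup]
    exact e.iSup_comp (g := fun i => ‖f i‖)
  · simp only [norm_eq_tsum_rpow hp]
    congr 1
    exact e.tsum_eq (fun i => ‖f i‖ ^ p.toReal)

variable (𝕜 E p) in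
def compEquiv [NormedField 𝕜] [NormedSpace 𝕜 E] [Fact (1 ≤ p)] (e : α ≃ β) :
    lp (fun _ : β => E) p ≃ₗᵢ[𝕜] lp (fun _ : α => E) p where
  toFun f := ⟨f ∘ e, (lp.memℓp f).comp_equiv e⟩
  invFun f := ⟨f ∘ e.symm, (lp.memℓp f).comp_equiv e.symm⟩
  left_inv f := lp.ext (funext fun i => by simp)
  right_inv f := lp.ext (funext fun i => by simp)
  map_add' _ _ := rfl
  map_smul' _ _ := rfl
  norm_map' f := norm_comp_equiv f e

@[simp]
theorem compEquiv_symm_apply [NormedField 𝕜] [NormedSpace 𝕜 E] [Fact (1 ≤ p)] (e : α ≃ β)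
    (f : lp (fun _ : α => E) p) (i : β) : (compEquiv 𝕜 E p e).symm f i = f (e.symm i) := rfl

theorem norm_le_of_forall_apply_eq_mul [RCLike 𝕜] [Fact (1 ≤ p)]
    {T : lp (fun _ : α => 𝕜) p →L[𝕜] lp (fun _ : α => 𝕜) p} {v : α → 𝕜} {C : ℝ}
    (hC : 0 ≤ C) (hv : ∀ i, ‖v i‖ ≤ C) (hT : ∀ f i, T f i = v i * f i) : ‖T‖ ≤ C := by
  refine T.opNorm_le_bound hC fun f => ?_
  have hp : p ≠ 0 := (zero_lt_one.trans_le Fact.out).ne'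
  calc ‖T f‖ ≤ ‖(C : 𝕜) • f‖ := lp.norm_mono hp fun i => by
        rw [hT, lp.coeFn_smul, Pi.smul_apply, norm_mul, norm_smul, RCLike.norm_ofReal,
          abs_of_nonneg hC]
        exact mul_le_mul_of_nonneg_right (hv i) (norm_nonneg _)
    _ = C * ‖f‖ := by rw [norm_smul, RCLike.norm_ofReal, abs_of_nonneg hC]

end lp

theorem spectrum_subset_of_mem_closure_conj {𝕜 A : Type*} [NormedField 𝕜] [NormedRing A]
    [NormedAlgebra 𝕜 A] [CompleteSpace A] {a b : A}
    (hb : b ∈ closure (Set.range fun u : Aˣ => (u : A) * a * ↑u⁻¹)) :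
    spectrum 𝕜 a ⊆ spectrum 𝕜 b := by
  intro z hza
  by_contra hzb
  have hopen : IsOpen {c : A | IsUnit (algebraMap 𝕜 A z - c)} :=
    Units.isOpen.preimage (by fun_prop)
  obtain ⟨_, hz, u, rfl⟩ := _root_.mem_closure_iff.1 hb _ hopen (spectrum.notMem_iff.1 hzb)
  exact spectrum.notMem_iff.2 hz (by rwa [spectrum.units_conjugate])

local notation "ℓ²(ℤ)" => lp (fun _ : ℤ => ℝ) 2

noncomputable def shiftUnit (k : ℤ) : (ℓ²(ℤ) →L[ℝ] ℓ²(ℤ))ˣ :=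
  (lp.compEquiv ℝ ℝ 2 (Equiv.addRight k)).toContinuousLinearEquiv.toUnit

def IsSchrodingerOp (v : ℤ → ℝ) (H : ℓ²(ℤ) →L[ℝ] ℓ²(ℤ)) : Prop :=
  ∀ (u : ℓ²(ℤ)) (n : ℤ), H u n = u (n + 1) + u (n - 1) + v n * u n

namespace IsSchrodingerOp

variable {v w : ℤ → ℝ} {H H' : ℓ²(ℤ) →L[ℝ] ℓ²(ℤ)}

theorem norm_sub_le (hH : IsSchrodingerOp v H) (hH' : IsSchrodingerOp w H') {C : ℝ}
    (hC : ∀ n, |v n - w n| ≤ C) : ‖H - H'‖ ≤ C :=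
  lp.norm_le_of_forall_apply_eq_mul ((abs_nonneg _).trans (hC 0)) hC fun u n => by
    simp only [sub_apply, lp.coeFn_sub, Pi.sub_apply, hH u n, hH' u n]
    ring

theorem conj_shiftUnit (hH : IsSchrodingerOp v H) (k : ℤ) :
    IsSchrodingerOp (fun n => v (n + k)) (shiftUnit k * H * ↑(shiftUnit k)⁻¹) := by
  intro u n
  change H ((lp.compEquiv ℝ ℝ 2 (Equiv.addRight k)).symm u) (n + k) = _
  rw [hH]
  simp only [lp.compEquiv_symm_apply, Equiv.addRight_symm, Equiv.coe_addRight]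
  ring_nf

end IsSchrodingerOp

noncomputable def almostMathieuPotential (lam α θ : ℝ) (n : ℤ) : ℝ :=
  2 * lam * Real.cos (2 * π * (θ + (n : ℝ) * α))

theorem almostMathieuPotential_add (lam α θ : ℝ) (n k m : ℤ) :
    almostMathieuPotential lam α θ (n + k) =
      almostMathieuPotential lam α (θ + (k * α + m)) n := by
  have hphase : 2 * π * (θ + (k * α + m) + n * α) = 2 * π * (θ + ↑(n + k) * α) + m * (2 * π) := by
    push_cast; ring
  rw [almostMathieuPotential, almostMathieuPotential, hphase, Real.cos_add_int_mul_two_pi]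

theorem abs_almostMathieuPotential_sub_le (lam α θ θ' : ℝ) (n : ℤ) :
    |almostMathieuPotential lam α θ n - almostMathieuPotential lam α θ' n| ≤
      4 * π * |lam| * |θ - θ'| :=
  calc _ = 2 * |lam| * |cos (2 * π * (θ + n * α)) - cos (2 * π * (θ' + n * α))| := by
        rw [almostMathieuPotential, almostMathieuPotential, ← mul_sub, abs_mul, abs_mul, abs_two]
    _ ≤ 2 * |lam| * |2 * π * (θ + n * α) - 2 * π * (θ' + n * α)| :=
        mul_le_mul_of_nonneg_left (abs_cos_sub_cos_le _ _) (by positivity)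
    _ = 4 * π * |lam| * |θ - θ'| := by
        rw [← mul_sub, add_sub_add_right_eq_sub, abs_mul, abs_mul, abs_two, abs_of_pos pi_pos]
        ring

theorem mem_closure_units_conj_of_almostMathieu {lam α θ₁ θ₂ : ℝ} (hα : Irrational α)
    {H₁ H₂ : ℓ²(ℤ) →L[ℝ] ℓ²(ℤ)} (h₁ : IsSchrodingerOp (almostMathieuPotential lam α θ₁) H₁)
    (h₂ : IsSchrodingerOp (almostMathieuPotential lam α θ₂) H₂) :
    H₂ ∈ closure (Set.range fun u : (ℓ²(ℤ) →L[ℝ] ℓ²(ℤ))ˣ => (u : ℓ²(ℤ) →L[ℝ] ℓ²(ℤ)) * H₁ * ↑u⁻¹) := by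
  rw [Metric.mem_closure_iff]
  intro ε hε
  have hdense : Dense (AddSubgroup.closure {α, 1} : Set ℝ) :=
    dense_addSubgroupClosure_pair_iff.2 (by rwa [div_one])
  obtain ⟨_, hmem, hnear⟩ := hdense.exists_mem_open
    (isOpen_lt (by fun_prop) continuous_const : IsOpen {y | 4 * π * |lam| * |θ₂ - (θ₁ + y)| < ε})
    ⟨θ₂ - θ₁, by simpa using hε⟩
  obtain ⟨k, m, rfl⟩ := AddSubgroup.mem_closure_pair.1 hmem
  refine ⟨_, ⟨shiftUnit k, rfl⟩, ?_⟩
  have hconj := h₁.conj_shiftUnit k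
  simp only [almostMathieuPotential_add _ _ _ _ k m] at hconj
  rw [dist_eq_norm]
  refine (h₂.norm_sub_le hconj fun n => abs_almostMathieuPotential_sub_le ..).trans_lt ?_
  simpa using hnear

/-- For the almost Mathieu operator `H_{λ,α,θ}` on `ℓ²(ℤ)` with irrational `α`,
the spectrum is independent of the phase `θ`. -/
theorem stmt_6 (lam α θ₁ θ₂ : ℝ) (hα : Irrational α)
    (H₁ H₂ : lp (fun _ : ℤ => ℝ) 2 →L[ℝ] lp (fun _ : ℤ => ℝ) 2)
    (h₁ : ∀ (u : lp (fun _ : ℤ => ℝ) 2) (n : ℤ),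
      (H₁ u : ∀ _ : ℤ, ℝ) n = (u : ∀ _ : ℤ, ℝ) (n + 1) + (u : ∀ _ : ℤ, ℝ) (n - 1) +
        2 * lam * Real.cos (2 * π * (θ₁ + (n : ℝ) * α)) * (u : ∀ _ : ℤ, ℝ) n)
    (h₂ : ∀ (u : lp (fun _ : ℤ => ℝ) 2) (n : ℤ),
      (H₂ u : ∀ _ : ℤ, ℝ) n = (u : ∀ _ : ℤ, ℝ) (n + 1) + (u : ∀ _ : ℤ, ℝ) (n - 1) +
        2 * lam * Real.cos (2 * π * (θ₂ + (n : ℝ) * α)) * (u : ∀ _ : ℤ, ℝ) n) :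
    spectrum ℝ H₁ = spectrum ℝ H₂ :=
  (spectrum_subset_of_mem_closure_conj (mem_closure_units_conj_of_almostMathieu hα h₁ h₂)).antisymm
    (spectrum_subset_of_mem_closure_conj (mem_closure_units_conj_of_almostMathieu hα h₂ h₁))
end

section
/- Let H be a self-adjoint operator on ℓ²(ℤ) and φ a polynomially bounded solution of Hφ = Eφ with φ(0) = 1 and |φ(k)| ≤ (1+|k|)^C. Suppose there exist c > 0 and, for every sufficiently large k, an interval I(k) = [x₁, x₂] ∋ k with dist(k, {x₁, x₂}) ≥ |I(k)|/5 and Green's function bounds |G_{I(k)}(k, x_i)| ≤ e^{−c|k−x_i|}, with interval lengths |I(k)| → ∞ at least linearly in dist to resonances. Then via the identity φ(x) = −G_I(x₁,x)φ(x₁−1) − G_I(x,x₂)φ(x₂+1) iterated along a chain of such intervals, φ decays exponentially: for every ε > 0, |φ(k)| ≤ e^{−(c−ε)|k|} for |k| large. -/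
open Real Matrix

/-!
The Poisson formula `φ(x) = -G_I(x, x₁) φ(x₁ - 1) - G_I(x, x₂) φ(x₂ + 1)` bounds `|φ k|` at a
regular point by the average of `|φ|` at the two points just outside `I(k)`, damped by
`e^{-β d}` for any `β < c` once `|I(k)|` is long. Start from the a priori bound
`|φ x| ≤ A e^{δ |x|}` (any `δ > 0`, from polynomial boundedness) and iterate: with
`M = A e^{(β + δ) K}`, after `N` steps `|φ k| ≤ M e^{-β |k|} + A e^{δ |k|} e^{-(β - δ) N}`, since
each step gains `e^{-(β - δ)}` on the a priori term while the points with `|x| < K`, where no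
regular interval is available, already satisfy `|φ x| ≤ M e^{-β |x|}`. Letting `N → ∞` leaves
`|φ k| ≤ M e^{-β |k|}`, which is below `e^{-(c - ε) |k|}` for large `|k|` when `β > c - ε`.
-/

/-- The matrix of the restriction `R_I (H - E) R_I` of the Schrödinger operator
`(H u)_n = u_{n+1} + u_{n-1} + v_n u_n` to the interval `I = [x₁, x₁ + k - 1]`. -/
noncomputable def schrMat (v : ℤ → ℝ) (E : ℝ) (x₁ : ℤ) (k : ℕ) :
    Matrix (Fin k) (Fin k) ℝ := fun i j =>
  (if i = j then v (x₁ + (i : ℤ)) - E else 0) +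
    (if (i : ℕ) + 1 = (j : ℕ) ∨ (j : ℕ) + 1 = (i : ℕ) then 1 else 0)

/-- `k` is `(c, L)`-regular: it lies in the middle three fifths of an interval
`I = [x₁, x₁ + m]` with `|I| ≥ L`, whose Green's function `G_I = (H_I - E)⁻¹` decays at rate `c`
from `k` to both endpoints of `I`. -/
def IsRegularPoint (v : ℤ → ℝ) (E c : ℝ) (L : ℕ) (k : ℤ) : Prop :=
  ∃ (x₁ : ℤ) (m : ℕ), L ≤ m + 1 ∧ x₁ ≤ k ∧ k ≤ x₁ + m ∧
    ((m : ℝ) + 1) ≤ 5 * ((k : ℝ) - (x₁ : ℝ)) ∧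
    ((m : ℝ) + 1) ≤ 5 * (((x₁ : ℝ) + m) - (k : ℝ)) ∧
    IsUnit (schrMat v E x₁ (m + 1)).det ∧
    ∀ i : Fin (m + 1), x₁ + (i : ℤ) = k →
      |(schrMat v E x₁ (m + 1))⁻¹ i 0| ≤ Real.exp (-c * ((k : ℝ) - (x₁ : ℝ))) ∧
      |(schrMat v E x₁ (m + 1))⁻¹ i (Fin.last m)| ≤
        Real.exp (-c * (((x₁ : ℝ) + m) - (k : ℝ)))

lemma sum_range_ite_adjacent {M : Type*} [AddCommMonoid M] (m j : ℕ) (g : ℕ → M) :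
    ∑ i ∈ Finset.range (m + 1), (if j + 1 = i ∨ i + 1 = j then g i else 0)
      = (if j < m then g (j + 1) else 0) + (if 0 < j ∧ j ≤ m + 1 then g (j - 1) else 0) := by
  have hsplit : ∀ i, (if j + 1 = i ∨ i + 1 = j then g i else 0)
      = (if j + 1 = i then g i else 0) + (if i + 1 = j then g i else 0) := by
    intro i; split_ifs <;> first | omega | simp
  rw [Finset.sum_congr rfl fun i _ => hsplit i, Finset.sum_add_distrib, Finset.sum_ite_eq]
  rcases j with _ | j
  · simp
  · simp [Finset.sum_ite_eq']

lemma exp_neg_mul_le_exp_neg_mul_add_one_div_two {β c d : ℝ} (hd : log 2 + β ≤ (c - β) * d) :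
    exp (-c * d) ≤ exp (-β * (d + 1)) / 2 := by
  rw [le_div_iff₀ two_pos, ← exp_log (two_pos : (0 : ℝ) < 2), ← exp_add]
  exact exp_le_exp.mpr (by linarith)

section Eigenfunction

variable {v : ℤ → ℝ} {E : ℝ} {φ : ℤ → ℝ}

/-- Only the two hopping terms leaving `I = [x₁, x₁ + m]` are missing from `(H_I - E) φ|_I`. -/
lemma schrMat_mulVec_eq (hφ : ∀ n : ℤ, φ (n + 1) + φ (n - 1) + v n * φ n = E * φ n)
    (x₁ : ℤ) (m : ℕ) :
    (schrMat v E x₁ (m + 1) *ᵥ fun i => φ (x₁ + i)) =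
      -(Pi.single 0 (φ (x₁ - 1)) + Pi.single (Fin.last m) (φ (x₁ + m + 1))) := by
  funext j
  simp only [mulVec, dotProduct, schrMat, add_mul, ite_mul, zero_mul, one_mul,
    Finset.sum_add_distrib, Finset.sum_ite_eq, Finset.mem_univ, if_true]
  rw [Fin.sum_univ_eq_sum_range
    (fun i => if (j : ℕ) + 1 = i ∨ i + 1 = (j : ℕ) then φ (x₁ + i) else 0),
    sum_range_ite_adjacent]
  have hj := j.isLt
  have hright : (if (j : ℕ) < m then φ (x₁ + ((j + 1 : ℕ) : ℤ)) else 0)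
      = φ (x₁ + j + 1) - if (j : ℕ) = m then φ (x₁ + m + 1) else 0 := by
    split_ifs with h₁ h₂ h₂
    · omega
    · rw [sub_zero]; congr 1; push_cast; ring
    · rw [h₂, sub_self]
    · omega
  have hleft : (if 0 < (j : ℕ) ∧ (j : ℕ) ≤ m + 1 then φ (x₁ + ((j - 1 : ℕ) : ℤ)) else 0)
      = φ (x₁ + j - 1) - if (j : ℕ) = 0 then φ (x₁ - 1) else 0 := by
    split_ifs with h₁ h₂ h₂
    · omega
    · rw [sub_zero]; congr 1; omega
    · rw [h₂]; simp
    · omega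
  simp only [Pi.neg_apply, Pi.add_apply, Pi.single_apply, Fin.ext_iff, Fin.val_zero,
    Fin.val_last]
  rw [hright, hleft]
  linarith [hφ (x₁ + j)]

lemma eq_neg_green_mul_sub_green_mul
    (hφ : ∀ n : ℤ, φ (n + 1) + φ (n - 1) + v n * φ n = E * φ n) {x₁ : ℤ} {m : ℕ}
    (hU : IsUnit (schrMat v E x₁ (m + 1)).det) (i : Fin (m + 1)) :
    φ (x₁ + i) = -((schrMat v E x₁ (m + 1))⁻¹ i 0 * φ (x₁ - 1))
      - (schrMat v E x₁ (m + 1))⁻¹ i (Fin.last m) * φ (x₁ + m + 1) := by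
  have h := congrFun (congrArg ((schrMat v E x₁ (m + 1))⁻¹ *ᵥ ·) (schrMat_mulVec_eq hφ x₁ m)) i
  simp only [mulVec_mulVec, nonsing_inv_mul _ hU, one_mulVec, mulVec_neg, mulVec_add,
    mulVec_single] at h
  rw [h]
  simp only [Pi.neg_apply, Pi.add_apply, Pi.smul_apply, col_apply, op_smul_eq_mul]
  ring

/-- The witnesses are `x₁ - 1` and `x₁ + m + 1`; the surplus rate `c - β` absorbs the factor `2`
and the extra unit step once `|I| ≥ L`. -/
theorem IsRegularPoint.exists_le_half_add
    (hφ : ∀ n : ℤ, φ (n + 1) + φ (n - 1) + v n * φ n = E * φ n) {c β : ℝ} {L : ℕ} {k : ℤ}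
    (hk : IsRegularPoint v E c L k) (hβc : β < c) (hL : 5 * (log 2 + β) ≤ (c - β) * L) :
    ∃ y z : ℤ, 1 ≤ dist k y ∧ 1 ≤ dist k z ∧
      |φ k| ≤ (exp (-β * dist k y) * |φ y| + exp (-β * dist k z) * |φ z|) / 2 := by
  obtain ⟨x₁, m, hLm, hx₁k, hkx₂, hd₁, hd₂, hU, hG⟩ := hk
  have hi : x₁ + ((⟨(k - x₁).toNat, by omega⟩ : Fin (m + 1)) : ℤ) = k := by
    dsimp only; omega
  obtain ⟨hG₁, hG₂⟩ := hG _ hi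
  have hLm' : (c - β) * L ≤ (c - β) * (m + 1) :=
    mul_le_mul_of_nonneg_left (by exact_mod_cast hLm) (by linarith)
  have hdist₁ : dist k (x₁ - 1) = (k - x₁ : ℝ) + 1 := by
    rw [Int.dist_eq, abs_of_nonneg] <;> push_cast <;> linarith
  have hdist₂ : dist k (x₁ + m + 1) = (x₁ + m - k : ℝ) + 1 := by
    rw [Int.dist_eq, abs_of_nonpos] <;> push_cast <;> linarith
  refine ⟨x₁ - 1, x₁ + m + 1, by rw [hdist₁]; linarith, by rw [hdist₂]; linarith, ?_⟩
  rw [← hi, eq_neg_green_mul_sub_green_mul hφ hU, hi, hdist₁, hdist₂]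
  calc _ ≤ |(schrMat v E x₁ (m + 1))⁻¹ _ 0| * |φ (x₁ - 1)|
        + |(schrMat v E x₁ (m + 1))⁻¹ _ (Fin.last m)| * |φ (x₁ + m + 1)| := by
        rw [← abs_mul, ← abs_mul, ← abs_neg (_ * φ (x₁ - 1))]
        exact abs_sub _ _
    _ ≤ exp (-β * ((k - x₁ : ℝ) + 1)) / 2 * |φ (x₁ - 1)|
        + exp (-β * ((x₁ + m - k : ℝ) + 1)) / 2 * |φ (x₁ + m + 1)| := by
        gcongr
        · exact hG₁.trans (exp_neg_mul_le_exp_neg_mul_add_one_div_two (by nlinarith))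
        · exact hG₂.trans (exp_neg_mul_le_exp_neg_mul_add_one_div_two (by nlinarith))
    _ = _ := by ring

end Eigenfunction

section Iteration

open Filter Topology

variable {X : Type*} [PseudoMetricSpace X] {o : X} {A β δ : ℝ}

/-- The bound `M e^{-β d(x, o)} + A e^{δ d(x, o)} q^N`, `q = e^{-(β - δ)}`, propagates from `y` to
`x` with `N ↦ N + 1` across a jump of length at least one. -/
lemma exp_neg_mul_dist_mul_le (M : ℝ) (hA : 0 ≤ A) (hM : 0 ≤ M) (hδ : 0 ≤ δ) (hδβ : δ ≤ β)
    (N : ℕ) {x y : X} (hxy : 1 ≤ dist x y) :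
    exp (-β * dist x y) * (M * exp (-β * dist y o) + A * exp (δ * dist y o) * exp (-(β - δ)) ^ N)
      ≤ M * exp (-β * dist x o) + A * exp (δ * dist x o) * exp (-(β - δ)) ^ (N + 1) := by
  have htri := dist_triangle x y o
  have htri' := dist_triangle_left y o x
  have h₁ : exp (-β * dist x y) * exp (-β * dist y o) ≤ exp (-β * dist x o) := by
    rw [← exp_add]; exact exp_le_exp.mpr (by nlinarith)
  have h₂ : exp (-β * dist x y) * exp (δ * dist y o) ≤ exp (δ * dist x o) * exp (-(β - δ)) := by
    rw [← exp_add, ← exp_add]; exact exp_le_exp.mpr (by nlinarith)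
  calc _ = M * (exp (-β * dist x y) * exp (-β * dist y o))
        + A * exp (-(β - δ)) ^ N * (exp (-β * dist x y) * exp (δ * dist y o)) := by ring
    _ ≤ M * exp (-β * dist x o)
        + A * exp (-(β - δ)) ^ N * (exp (δ * dist x o) * exp (-(β - δ))) := by gcongr
    _ = _ := by ring

theorem le_mul_exp_neg_dist_of_le_half_add {f : X → ℝ} {K : ℝ} (hA : 0 ≤ A) (hδ : 0 ≤ δ)
    (hδβ : δ < β) (hgrowth : ∀ x, f x ≤ A * exp (δ * dist x o))
    (hstep : ∀ x, K ≤ dist x o → ∃ y z, 1 ≤ dist x y ∧ 1 ≤ dist x z ∧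
      f x ≤ (exp (-β * dist x y) * f y + exp (-β * dist x z) * f z) / 2) :
    ∀ x, f x ≤ A * exp ((β + δ) * K) * exp (-β * dist x o) := by
  set M := A * exp ((β + δ) * K)
  have hM : 0 ≤ M := by positivity
  have hnear : ∀ x, dist x o < K → f x ≤ M * exp (-β * dist x o) := by
    intro x hx
    refine (hgrowth x).trans ?_
    rw [mul_assoc, ← exp_add]
    gcongr
    nlinarith
  obtain ⟨b, hb⟩ : ∃ b : ℕ → X → ℝ,
      ∀ N x, b N x = M * exp (-β * dist x o) + A * exp (δ * dist x o) * exp (-(β - δ)) ^ N :=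
    ⟨_, fun _ _ => rfl⟩
  have hprop : ∀ N {x y}, 1 ≤ dist x y → exp (-β * dist x y) * b N y ≤ b (N + 1) x := by
    intro N x y hxy
    rw [hb, hb]
    exact exp_neg_mul_dist_mul_le M hA hM hδ hδβ.le N hxy
  have hiter : ∀ N x, f x ≤ b N x := by
    intro N
    induction N with
    | zero => intro x; simpa [hb] using (hgrowth x).trans (le_add_of_nonneg_left (by positivity))
    | succ N ih =>
      intro x
      rcases lt_or_ge (dist x o) K with hx | hx
      · rw [hb]; exact (hnear x hx).trans (le_add_of_nonneg_right (by positivity))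
      obtain ⟨y, z, hy, hz, hf⟩ := hstep x hx
      calc f x ≤ (exp (-β * dist x y) * f y + exp (-β * dist x z) * f z) / 2 := hf
        _ ≤ (exp (-β * dist x y) * b N y + exp (-β * dist x z) * b N z) / 2 := by
            gcongr
            exacts [ih y, ih z]
        _ ≤ b (N + 1) x := by linarith [hprop N hy, hprop N hz]
  intro x
  have hlim : Tendsto (fun N => b N x) atTop (𝓝 (M * exp (-β * dist x o))) := by
    simp only [hb]
    simpa using tendsto_const_nhds.add (tendsto_const_nhds.mul
      (tendsto_pow_atTop_nhds_zero_of_lt_one (exp_pos _).le (exp_lt_one_iff.mpr (by linarith))))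
  exact ge_of_tendsto' hlim fun N => hiter N x

end Iteration

lemma exists_one_add_rpow_le_mul_exp (C : ℝ) {δ : ℝ} (hδ : 0 < δ) :
    ∃ A, 0 < A ∧ ∀ x : ℝ, 0 ≤ x → (1 + x) ^ C ≤ A * exp (δ * x) := by
  set p := max C 1
  have hp : 0 < p := lt_max_of_lt_right one_pos
  set a := min 1 (δ / p)
  have ha : 0 < a := lt_min one_pos (div_pos hδ hp)
  have hap : a * p ≤ δ := (le_div_iff₀ hp).mp (min_le_right _ _)
  refine ⟨a⁻¹ ^ p, by positivity, fun x hx => ?_⟩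
  have hlin : 1 + x ≤ a⁻¹ * exp (a * x) := by
    rw [le_inv_mul_iff₀ ha]
    nlinarith [add_one_le_exp (a * x), min_le_left 1 (δ / p)]
  calc (1 + x) ^ C ≤ (1 + x) ^ p := rpow_le_rpow_of_exponent_le (by linarith) (le_max_left _ _)
    _ ≤ (a⁻¹ * exp (a * x)) ^ p := rpow_le_rpow (by linarith) hlin hp.le
    _ = a⁻¹ ^ p * exp (a * p * x) := by
        rw [mul_rpow (by positivity) (exp_pos _).le, ← exp_mul]; ring_nf
    _ ≤ a⁻¹ ^ p * exp (δ * x) := by gcongr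

lemma exists_nat_forall_le_mul_exp_le {M a b : ℝ} (hM : 0 < M) (hba : b < a) :
    ∃ K : ℕ, ∀ t : ℝ, K ≤ t → M * exp (b * t) ≤ exp (a * t) := by
  obtain ⟨K, hK⟩ := exists_nat_ge (log M / (a - b))
  refine ⟨K, fun t ht => ?_⟩
  rw [← log_le_iff_le_exp (by positivity), log_mul hM.ne' (exp_pos _).ne', log_exp]
  nlinarith [(div_le_iff₀ (sub_pos.mpr hba)).mp (hK.trans ht)]

lemma Int.dist_zero_right (k : ℤ) : dist k 0 = |(k : ℝ)| := by
  rw [Int.dist_eq, Int.cast_zero, sub_zero]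

theorem stmt_17_general (v : ℤ → ℝ) (E : ℝ) (φ : ℤ → ℝ) (C : ℝ)
    (hφ : ∀ n : ℤ, φ (n + 1) + φ (n - 1) + v n * φ n = E * φ n)
    (hbd : ∀ k : ℤ, |φ k| ≤ (1 + |(k : ℝ)|) ^ C)
    (c : ℝ) (hc : 0 < c)
    (hreg : ∀ L : ℕ, ∃ K : ℕ, ∀ k : ℤ, (K : ℤ) ≤ |k| →
      ∃ (x₁ : ℤ) (m : ℕ), L ≤ m + 1 ∧ x₁ ≤ k ∧ k ≤ x₁ + m ∧
        ((m : ℝ) + 1) ≤ 5 * ((k : ℝ) - (x₁ : ℝ)) ∧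
        ((m : ℝ) + 1) ≤ 5 * (((x₁ : ℝ) + m) - (k : ℝ)) ∧
        IsUnit (schrMat v E x₁ (m + 1)).det ∧
        ∀ i : Fin (m + 1), x₁ + (i : ℤ) = k →
          |(schrMat v E x₁ (m + 1))⁻¹ i 0| ≤ Real.exp (-c * ((k : ℝ) - (x₁ : ℝ))) ∧
          |(schrMat v E x₁ (m + 1))⁻¹ i (Fin.last m)| ≤
            Real.exp (-c * (((x₁ : ℝ) + m) - (k : ℝ)))) :
    ∀ ε > 0, ∃ K : ℕ, ∀ k : ℤ, (K : ℤ) ≤ |k| →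
      |φ k| ≤ Real.exp (-(c - ε) * |(k : ℝ)|) := by
  intro ε hε
  wlog hεc : ε < c generalizing ε
  · obtain ⟨K, hK⟩ := this (c / 2) (by positivity) (by linarith)
    exact ⟨K, fun k hk => (hK k hk).trans (exp_le_exp.mpr (by nlinarith [abs_nonneg (k : ℝ)]))⟩
  set β := c - ε / 2 with hβ
  obtain ⟨A, hA, hAC⟩ := exists_one_add_rpow_le_mul_exp C (by positivity : 0 < ε / 4)
  obtain ⟨K, hK⟩ := hreg ⌈5 * (log 2 + β) / (ε / 2)⌉₊
  have hL : 5 * (log 2 + β) ≤ (c - β) * ⌈5 * (log 2 + β) / (ε / 2)⌉₊ := by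
    rw [show c - β = ε / 2 by ring]
    exact (div_le_iff₀' (by positivity)).mp (Nat.le_ceil _)
  have hdecay (k : ℤ) : |φ k| ≤ A * exp ((β + ε / 4) * K) * exp (-β * |(k : ℝ)|) := by
    rw [← Int.dist_zero_right]
    refine le_mul_exp_neg_dist_of_le_half_add (f := fun k => |φ k|) hA.le (by positivity)
      (by linarith) (fun k => ?_) (fun k hk => ?_) k
    · rw [Int.dist_zero_right]
      exact (hbd k).trans (hAC _ (abs_nonneg _))
    · refine IsRegularPoint.exists_le_half_add hφ (hK k ?_) (by linarith) hL
      rw [Int.dist_zero_right, ← Int.cast_abs] at hk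
      exact_mod_cast hk
  obtain ⟨K', hK'⟩ := exists_nat_forall_le_mul_exp_le
    (by positivity : 0 < A * exp ((β + ε / 4) * K)) (show -β < -(c - ε) by linarith)
  exact ⟨K', fun k hk => (hdecay k).trans (hK' _ (by rw [← Int.cast_abs]; exact_mod_cast hk))⟩

/-- Block resolvent expansion: if `φ` is a polynomially bounded generalized
eigenfunction with `φ 0 = 1`, and every point `k` of sufficiently large modulus is
`(c, |I|)`-regular — i.e. lies well inside an interval `I(k) = [x₁, x₁ + m]`
(with `dist(k, ∂I) ≥ |I|/5` and lengths tending to infinity) on which the Green's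
function satisfies `|G_{I(k)}(k, x_i)| ≤ e^{-c |k - x_i|}` — then `φ` decays
exponentially: for every `ε > 0`, `|φ(k)| ≤ e^{-(c-ε)|k|}` for large `|k|`. -/
theorem stmt_17 (v : ℤ → ℝ) (E : ℝ) (φ : ℤ → ℝ) (C : ℝ)
    (hφ : ∀ n : ℤ, φ (n + 1) + φ (n - 1) + v n * φ n = E * φ n)
    (h0 : φ 0 = 1) (hbd : ∀ k : ℤ, |φ k| ≤ (1 + |(k : ℝ)|) ^ C)
    (c : ℝ) (hc : 0 < c)
    (hreg : ∀ L : ℕ, ∃ K : ℕ, ∀ k : ℤ, (K : ℤ) ≤ |k| →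
      ∃ (x₁ : ℤ) (m : ℕ), L ≤ m + 1 ∧ x₁ ≤ k ∧ k ≤ x₁ + m ∧
        ((m : ℝ) + 1) ≤ 5 * ((k : ℝ) - (x₁ : ℝ)) ∧
        ((m : ℝ) + 1) ≤ 5 * (((x₁ : ℝ) + m) - (k : ℝ)) ∧
        IsUnit (schrMat v E x₁ (m + 1)).det ∧
        ∀ i : Fin (m + 1), x₁ + (i : ℤ) = k →
          |(schrMat v E x₁ (m + 1))⁻¹ i 0| ≤ Real.exp (-c * ((k : ℝ) - (x₁ : ℝ))) ∧
          |(schrMat v E x₁ (m + 1))⁻¹ i (Fin.last m)| ≤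
            Real.exp (-c * (((x₁ : ℝ) + m) - (k : ℝ)))) :
    ∀ ε > 0, ∃ K : ℕ, ∀ k : ℤ, (K : ℤ) ≤ |k| →
      |φ k| ≤ Real.exp (-(c - ε) * |(k : ℝ)|) :=
  stmt_17_general v E φ C hφ hbd c hc hreg
end
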